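/- arXiv:2205.05505 — 6 statements merged into one kernel-verified Lean document; each statement's English description precedes it below -/
import Mathlib

section
/- The hypervolume improvement function y ↦ Δ⁺(y; Y, r) is continuous on ℝ^m restricted to the region {y : y ≤ r componentwise}. -/
open MeasureTheory

/-- The hypervolume indicator: Lebesgue measure of the union of boxes `[a, r]` for `a ∈ A`. -/
noncomputable def HV {m : ℕ} (A : Finset (Fin m → ℝ)) (r : Fin m → ℝ) : ℝ :=
  (volume (⋃ a ∈ A, Set.Icc a r)).toReal

/-!
Adding a common set `U` to two sets does not increase the measure of their symmetric
difference, so `|λ([y, r] ∪ U) - λ([y₀, r] ∪ U)| ≤ λ([y, r] ∆ [y₀, r])`.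
Since `[y, r] ∩ [y₀, r] = [y ⊔ y₀, r]`, the right-hand side is the polynomial
`∏ (r - y) + ∏ (r - y₀) - 2 ∏ (r - y ⊔ y₀)`, continuous in `y` and vanishing at `y₀`.
-/

open Set
open scoped symmDiff ENNReal

theorem abs_measureReal_union_sub_union_le {α : Type*} [MeasurableSpace α] {μ : Measure α}
    {s t u : Set α} (hs : MeasurableSet s) (ht : MeasurableSet t) (hu : MeasurableSet u)
    (hs' : μ s ≠ ∞) (ht' : μ t ≠ ∞) (hu' : μ u ≠ ∞) :
    |μ.real (s ∪ u) - μ.real (t ∪ u)| ≤ μ.real (s ∆ t) := by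
  refine (abs_measureReal_sub_le_measureReal_symmDiff' (hs.union hu).nullMeasurableSet
    (ht.union hu).nullMeasurableSet (measure_union_ne_top hs' hu')
    (measure_union_ne_top ht' hu')).trans (measureReal_mono ?_ (measure_symmDiff_ne_top hs' ht'))
  simpa using union_symmDiff_union_subset (s := s) (t := u) (u := t) (v := u)

section Boxes

variable {ι : Type*} [Fintype ι] {a b r : ι → ℝ}

theorem volume_real_Icc_sdiff_Icc (ha : a ≤ r) (hb : b ≤ r) :
    volume.real (Icc a r \ Icc b r) = ∏ i, (r i - a i) - ∏ i, (r i - (a ⊔ b) i) := by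
  have hsub : Icc (a ⊔ b) r ⊆ Icc a r := Icc_subset_Icc_left le_sup_left
  rw [← sdiff_self_inter, Icc_inter_Icc, inf_idem,
    measureReal_sdiff hsub measurableSet_Icc measure_Icc_lt_top.ne, measureReal_def,
    measureReal_def, Real.volume_Icc_pi_toReal ha,
    Real.volume_Icc_pi_toReal (sup_le ha hb)]

theorem volume_real_Icc_symmDiff_Icc (ha : a ≤ r) (hb : b ≤ r) :
    volume.real (Icc a r ∆ Icc b r) =
      ∏ i, (r i - a i) + ∏ i, (r i - b i) - 2 * ∏ i, (r i - (a ⊔ b) i) := by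
  rw [measureReal_symmDiff_eq measurableSet_Icc measurableSet_Icc measure_Icc_lt_top.ne
      measure_Icc_lt_top.ne,
    volume_real_Icc_sdiff_Icc ha hb, volume_real_Icc_sdiff_Icc hb ha, sup_comm b a]
  ring

theorem continuousOn_volume_real_Icc_union {u : Set (ι → ℝ)} (hu : MeasurableSet u)
    (hu' : volume u ≠ ∞) :
    ContinuousOn (fun y => volume.real (Icc y r ∪ u)) {y | y ≤ r} := by
  intro y₀ hy₀
  set g : (ι → ℝ) → ℝ := fun y =>
    ∏ i, (r i - y i) + ∏ i, (r i - y₀ i) - 2 * ∏ i, (r i - (y ⊔ y₀) i)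
  have hg : Continuous g := by
    simp only [g, Pi.sup_apply]
    fun_prop
  have hg₀ : g y₀ = 0 := by simp only [g, sup_idem]; ring
  have hbound : ∀ y ∈ {y | y ≤ r},
      |volume.real (Icc y r ∪ u) - volume.real (Icc y₀ r ∪ u)| ≤ g y := fun y hy =>
    (abs_measureReal_union_sub_union_le measurableSet_Icc measurableSet_Icc hu
      measure_Icc_lt_top.ne measure_Icc_lt_top.ne hu').trans_eq
      (volume_real_Icc_symmDiff_Icc hy hy₀)
  rw [ContinuousWithinAt, tendsto_iff_norm_sub_tendsto_zero]
  refine squeeze_zero' (.of_forall fun _ => norm_nonneg _)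
    (eventually_mem_nhdsWithin.mono hbound) ?_
  simpa only [hg₀] using (hg.tendsto y₀).mono_left nhdsWithin_le_nhds

end Boxes

theorem hvi_continuousOn_general {m : ℕ} (Y : Finset (Fin m → ℝ)) (r : Fin m → ℝ) :
    ContinuousOn (fun y => HV (insert y Y) r - HV Y r) {y : Fin m → ℝ | y ≤ r} := by
  have hU : MeasurableSet (⋃ a ∈ Y, Icc a r) :=
    Finset.measurableSet_biUnion Y fun _ _ => measurableSet_Icc
  have hU' : volume (⋃ a ∈ Y, Icc a r) ≠ ∞ :=
    (measure_biUnion_lt_top Y.finite_toSet fun _ _ => measure_Icc_lt_top).ne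
  have hHV : ∀ y, HV (insert y Y) r = volume.real (Icc y r ∪ ⋃ a ∈ Y, Icc a r) := by
    intro y
    rw [HV, Finset.set_biUnion_insert, measureReal_def]
  simp only [hHV]
  exact (continuousOn_volume_real_Icc_union hU hU').sub continuousOn_const

/-- The hypervolume improvement `y ↦ Δ⁺(y; Y, r)` is continuous on the region `{y : y ≤ r}`. -/
theorem hvi_continuousOn {m : ℕ} (Y : Finset (Fin m → ℝ)) (r : Fin m → ℝ)
    (hY : ∀ a ∈ Y, ∀ i, a i < r i) :
    ContinuousOn (fun y => HV (insert y Y) r - HV Y r) {y : Fin m → ℝ | y ≤ r} :=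
  hvi_continuousOn_general Y r
end

section
/- In ℝ², if y lies in the non-dominated region of P and strictly dominates no point of P (i.e., y is in a cell C(i,j) with i + j ≤ n whose interior dominates no point of P), and q^{(a)}, q^{(b)} are the neighboring Pareto points with q₁^{(a)} ≤ y₁ < q₁^{(b)} where q₂^{(b)} ≤ y₂ < q₂^{(a)}, then Δ⁺(y; P, r) = (q₁^{(b)} − y₁)(q₂^{(a)} − y₂). -/
/-!
Adding `y` increases the hypervolume by the measure of the part of `[y, r]` not yet dominated.
When `y` lies between the neighbours `q⁽ᵃ⁾` and `q⁽ᵇ⁾`, every Pareto point lies weakly right of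
`q⁽ᵇ⁾` or weakly above `q⁽ᵃ⁾`, so that part is the rectangle `[y₁, q₁⁽ᵇ⁾) × [y₂, q₂⁽ᵃ⁾)`.
-/

open MeasureTheory

/-- The 2-D hypervolume indicator. -/
noncomputable def HV2 (A : Finset (ℝ × ℝ)) (r : ℝ × ℝ) : ℝ :=
  (volume (⋃ a ∈ A, Set.Icc a r)).toReal

open Set

theorem HV2_insert_sub_HV2 (A : Finset (ℝ × ℝ)) (y r : ℝ × ℝ) :
    HV2 (insert y A) r - HV2 A r = (volume (Icc y r \ ⋃ a ∈ A, Icc a r)).toReal := by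
  set U := ⋃ a ∈ A, Icc a r
  have hU : MeasurableSet U := Finset.measurableSet_biUnion A fun _ _ => measurableSet_Icc
  have hU_fin : volume U ≠ ⊤ := (A.isCompact_biUnion fun _ _ => isCompact_Icc).measure_lt_top.ne
  have hD_fin : volume (Icc y r \ U) ≠ ⊤ :=
    ((measure_mono sdiff_subset).trans_lt isCompact_Icc.measure_lt_top).ne
  rw [HV2, HV2, Finset.set_biUnion_insert, union_comm, ← union_sdiff_self,
    measure_union disjoint_sdiff_right (measurableSet_Icc.diff hU), ENNReal.toReal_add hU_fin hD_fin,
    add_sub_cancel_left]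

theorem Icc_diff_iUnion_Icc_eq_Ico_prod_Ico {ι : Type*} (q : ι → ℝ × ℝ) (y r : ℝ × ℝ) (a b : ι)
    (ha : (q a).1 ≤ y.1) (hb : (q b).2 ≤ y.2) (hbr : (q b).1 ≤ r.1) (har : (q a).2 ≤ r.2)
    (hbeyond : ∀ k, (q b).1 ≤ (q k).1 ∨ (q a).2 ≤ (q k).2) :
    Icc y r \ ⋃ k, Icc (q k) r = Ico y.1 (q b).1 ×ˢ Ico y.2 (q a).2 := by
  ext x
  simp only [mem_sdiff, mem_iUnion, not_exists, mem_Icc, Prod.le_def, mem_prod, mem_Ico]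
  constructor
  · rintro ⟨⟨⟨hy1, hy2⟩, hxr⟩, hnot⟩
    have hx1 : x.1 < (q b).1 := by
      by_contra! h
      exact hnot b ⟨⟨h, hb.trans hy2⟩, hxr⟩
    have hx2 : x.2 < (q a).2 := by
      by_contra! h
      exact hnot a ⟨⟨ha.trans hy1, h⟩, hxr⟩
    exact ⟨⟨hy1, hx1⟩, hy2, hx2⟩
  · rintro ⟨⟨hy1, hx1⟩, hy2, hx2⟩
    refine ⟨⟨⟨hy1, hy2⟩, hx1.le.trans hbr, hx2.le.trans har⟩, fun k ⟨⟨hk1, hk2⟩, _⟩ => ?_⟩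
    rcases hbeyond k with h | h
    · exact hx1.not_ge (h.trans hk1)
    · exact hx2.not_ge (h.trans hk2)

theorem Fin.le_or_le_of_val_eq_succ {n : ℕ} {a b : Fin n} (hab : (b : ℕ) = (a : ℕ) + 1)
    (k : Fin n) : k ≤ a ∨ b ≤ k := by
  rw [Fin.le_def, Fin.le_def]
  omega

/-- If `y` lies in the non-dominated region between neighboring Pareto points `q⁽ᵃ⁾` and
`q⁽ᵇ⁾` (with `q₁⁽ᵃ⁾ ≤ y₁ < q₁⁽ᵇ⁾` and `q₂⁽ᵇ⁾ ≤ y₂ < q₂⁽ᵃ⁾`), then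
`Δ⁺(y; P, r) = (q₁⁽ᵇ⁾ − y₁)(q₂⁽ᵃ⁾ − y₂)`. -/
theorem hvi2_cell_formula {n : ℕ} (q1 q2 : Fin n → ℝ) (r y : ℝ × ℝ)
    (h1 : StrictMono q1) (h2 : StrictAnti q2)
    (hr : ∀ k, q1 k < r.1 ∧ q2 k < r.2)
    (a b : Fin n) (hab : (b : ℕ) = (a : ℕ) + 1)
    (ha1 : q1 a ≤ y.1) (hb1 : y.1 < q1 b)
    (hb2 : q2 b ≤ y.2) (ha2 : y.2 < q2 a) :
    HV2 (insert y (Finset.univ.image fun k => (q1 k, q2 k))) r -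
        HV2 (Finset.univ.image fun k => (q1 k, q2 k)) r =
      (q1 b - y.1) * (q2 a - y.2) := by
  have hbeyond (k : Fin n) : q1 b ≤ q1 k ∨ q2 a ≤ q2 k :=
    (Fin.le_or_le_of_val_eq_succ hab k).symm.imp (h1.monotone ·) (h2.antitone ·)
  have hcell := Icc_diff_iUnion_Icc_eq_Ico_prod_Ico (fun k => (q1 k, q2 k)) y r a b ha1 hb2
    (hr b).1.le (hr a).2.le hbeyond
  rw [HV2_insert_sub_HV2, Finset.set_biUnion_finset_image]
  simp only [Finset.mem_univ, iUnion_true]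
  rw [hcell, Measure.volume_eq_prod, Measure.prod_prod, Real.volume_Ico, Real.volume_Ico,
    ENNReal.toReal_mul, ENNReal.toReal_ofReal (by linarith), ENNReal.toReal_ofReal (by linarith)]
end

section
/- Given the cell decomposition of the bounded objective region (−∞, r₁] × (−∞, r₂] into cells C(i,j) = [l^{(i,j)}, u^{(i,j)}] with l^{(i,j)} = (q₁⁽ⁱ⁾, q₂⁽ⁿ⁺¹⁻ʲ⁾) and u^{(i,j)} = (q₁⁽ⁱ⁺¹⁾, q₂⁽ⁿ⁻ʲ⁾) for i, j ∈ [0..n], the union of all cells equals (−∞, r₁] × (−∞, r₂], and the interiors of distinct cells are pairwise disjoint. -/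
/-!
Each cell is a product `I × J` of two intervals between consecutive terms of monotone
sequences (for the second coordinate, of `j ↦ Q₂ (n + 1 - j)`). Consecutive intervals
`[f k, f (k + 1)]` tile `[f 0, f (n + 1)]`, and their interiors, the open intervals, are pairwise
disjoint; since `interior (I × J) = interior I × interior J`, both claims reduce to these two
one-dimensional facts.
-/

/-- The cell `C(i,j) = [l⁽ⁱʲ⁾, u⁽ⁱʲ⁾]` of the bi-objective cell decomposition, where the
(extended-real valued) boundary coordinates are `l⁽ⁱʲ⁾ = (Q₁ i, Q₂ (n+1−j))` and
`u⁽ⁱʲ⁾ = (Q₁ (i+1), Q₂ (n−j))`. -/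
def Cell (Q1 Q2 : ℕ → EReal) (n i j : ℕ) : Set (ℝ × ℝ) :=
  {y | Q1 i ≤ (y.1 : EReal) ∧ (y.1 : EReal) ≤ Q1 (i + 1) ∧
       Q2 (n + 1 - j) ≤ (y.2 : EReal) ∧ (y.2 : EReal) ≤ Q2 (n - j)}

open Set Topology

theorem Set.Icc_subset_biUnion_Icc {X : Type*} [LinearOrder X] (N : ℕ) (a : ℕ → X) :
    Icc (a 0) (a (N + 1)) ⊆ ⋃ i ∈ Finset.range (N + 1), Icc (a i) (a (i + 1)) := by
  induction N with
  | zero => simp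
  | succ N ih => calc
    _ ⊆ Icc (a 0) (a (N + 1)) ∪ Icc (a (N + 1)) (a (N + 2)) := Icc_subset_Icc_union_Icc
    _ ⊆ _ := by simpa [Finset.range_add_one] using
                  union_subset_union_right (Icc (a (N + 1)) (a (N + 2))) ih

theorem MonotoneOn.biUnion_range_Icc_eq {X : Type*} [LinearOrder X] {N : ℕ} {a : ℕ → X}
    (ha : MonotoneOn a (Iic (N + 1))) :
    ⋃ i ∈ Finset.range (N + 1), Icc (a i) (a (i + 1)) = Icc (a 0) (a (N + 1)) := by
  refine (iUnion₂_subset fun i hi => Icc_subset_Icc ?_ ?_).antisymm (Icc_subset_biUnion_Icc N a)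
  all_goals
    rw [Finset.mem_range] at hi
    exact ha (by simp only [mem_Iic]; omega) (by simp only [mem_Iic]; omega) (by omega)

theorem MonotoneOn.disjoint_Ioo_of_ne {X : Type*} [Preorder X] {N k l : ℕ} {a : ℕ → X}
    (ha : MonotoneOn a (Iic N)) (hk : k ≤ N) (hl : l ≤ N) (hkl : k ≠ l) :
    Disjoint (Ioo (a k) (a (k + 1))) (Ioo (a l) (a (l + 1))) := by
  wlog hlt : k < l generalizing k l
  · exact (this hl hk hkl.symm (by omega)).symm
  have hsep : a (k + 1) ≤ a l := ha (by simp only [mem_Iic]; omega) (by rwa [mem_Iic]) hlt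
  exact disjoint_left.2 fun x hx hx' => (hx.2.trans_le hsep).not_gt hx'.1

theorem StrictMono.interior_preimage_Icc_subset {α β : Type*} [LinearOrder α] [TopologicalSpace α]
    [OrderTopology α] [DenselyOrdered α] [NoMinOrder α] [NoMaxOrder α] [Preorder β]
    {e : α → β} (he : StrictMono e) (a b : β) :
    interior (e ⁻¹' Icc a b) ⊆ e ⁻¹' Ioo a b := by
  intro x hx
  have hnhds : e ⁻¹' Icc a b ∈ 𝓝 x := mem_interior_iff_mem_nhds.1 hx
  have hleft : e ⁻¹' Icc a b ∩ Iio x ∈ 𝓝[<] x :=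
    Filter.inter_mem (mem_nhdsWithin_of_mem_nhds hnhds) self_mem_nhdsWithin
  have hright : e ⁻¹' Icc a b ∩ Ioi x ∈ 𝓝[>] x :=
    Filter.inter_mem (mem_nhdsWithin_of_mem_nhds hnhds) self_mem_nhdsWithin
  obtain ⟨u, hu, hux⟩ := Filter.nonempty_of_mem hleft
  obtain ⟨v, hv, hxv⟩ := Filter.nonempty_of_mem hright
  exact ⟨hu.1.trans_lt (he hux), (he hxv).trans_le hv.2⟩

theorem cell_eq_prod (Q1 Q2 : ℕ → EReal) (n i j : ℕ) :
    Cell Q1 Q2 n i j = ((↑) ⁻¹' Icc (Q1 i) (Q1 (i + 1)) : Set ℝ) ×ˢ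
      ((↑) ⁻¹' Icc (Q2 (n + 1 - j)) (Q2 (n - j)) : Set ℝ) := by
  ext y
  simp only [Cell, mem_ofPred_eq, mem_prod, mem_preimage, mem_Icc, and_assoc]

/-- The cells `C(i,j)`, `i, j ∈ [0..n]`, cover the region `(−∞, r₁] × (−∞, r₂]`, and distinct
cells have disjoint interiors.  Here `Q₁, Q₂` are the coordinates of the augmented Pareto set:
`Q₁` strictly increasing with `Q₁ 0 = −∞`, `Q₁ (n+1) = r₁`; `Q₂` strictly decreasing with
`Q₂ 0 = r₂`, `Q₂ (n+1) = −∞`. -/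
theorem cell_decomposition (n : ℕ) (Q1 Q2 : ℕ → EReal) (r : ℝ × ℝ)
    (hQ1 : ∀ k l, k < l → l ≤ n + 1 → Q1 k < Q1 l)
    (hQ2 : ∀ k l, k < l → l ≤ n + 1 → Q2 l < Q2 k)
    (h10 : Q1 0 = ⊥) (h1r : Q1 (n + 1) = (r.1 : EReal))
    (h20 : Q2 0 = (r.2 : EReal)) (h2r : Q2 (n + 1) = ⊥) :
    (⋃ i ∈ Finset.range (n + 1), ⋃ j ∈ Finset.range (n + 1), Cell Q1 Q2 n i j) =
        {y : ℝ × ℝ | y.1 ≤ r.1 ∧ y.2 ≤ r.2} ∧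
      ∀ i j i' j', i ≤ n → j ≤ n → i' ≤ n → j' ≤ n → (i, j) ≠ (i', j') →
        interior (Cell Q1 Q2 n i j) ∩ interior (Cell Q1 Q2 n i' j') = ∅ := by
  have hmono1 : MonotoneOn Q1 (Iic (n + 1)) :=
    StrictMonoOn.monotoneOn fun k _ l hl hkl => hQ1 k l hkl hl
  -- reversed, so that row `j` of cells lies between its consecutive terms `j` and `j + 1`
  have hmono2 : MonotoneOn (fun j => Q2 (n + 1 - j)) (Iic (n + 1)) :=
    StrictMonoOn.monotoneOn fun k _ l hl hkl =>
      hQ2 _ _ (by simp only [mem_Iic] at hl; omega) (by omega)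
  refine ⟨?_, fun i j i' j' hi hj hi' hj' hne => ?_⟩
  · have hunion2 := hmono2.biUnion_range_Icc_eq
    simp only [Nat.add_sub_add_right, Nat.sub_zero, Nat.sub_self] at hunion2
    simp only [cell_eq_prod, ← prod_iUnion₂, ← iUnion₂_prod_const, ← preimage_iUnion₂,
      hmono1.biUnion_range_Icc_eq, hunion2, h10, h1r, h20, h2r]
    ext y
    simp [Prod.le_def]
  · rw [← disjoint_iff_inter_eq_empty, cell_eq_prod, cell_eq_prod, interior_prod_eq,
      interior_prod_eq]
    have hsub := EReal.coe_strictMono.interior_preimage_Icc_subset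
    refine Disjoint.mono (prod_mono (hsub _ _) (hsub _ _)) (prod_mono (hsub _ _) (hsub _ _)) ?_
    rw [disjoint_prod]
    rcases eq_or_ne i i' with rfl | hii'
    · have hjj' : j ≠ j' := fun h => hne (h ▸ rfl)
      have := hmono2.disjoint_Ioo_of_ne (by omega) (by omega) hjj'
      simp only [Nat.add_sub_add_right] at this
      exact Or.inr (this.preimage _)
    · exact Or.inl ((hmono1.disjoint_Ioo_of_ne (by omega) (by omega) hii').preimage _)
end

section
/- On a fixed non-dominated cell, the map y ↦ Δ⁺(y) attains its maximum at the lower-left corner l^{(i,j)} and its minimum at the upper-right corner u^{(i,j)}; hence for y ∈ C(i,j), Δ⁺(y) ∈ [Δ⁺(u^{(i,j)}), Δ⁺(l^{(i,j)})]. -/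
open MeasureTheory

lemma volume_biUnion_Icc_ne_top (A : Finset (ℝ × ℝ)) (r : ℝ × ℝ) :
    volume (⋃ a ∈ A, Set.Icc a r) ≠ ⊤ :=
  ((Bornology.isBounded_biUnion_finset A).2 fun a _ => Metric.isBounded_Icc a r)
    |>.measure_lt_top.ne

lemma antitone_HV2_insert (P : Finset (ℝ × ℝ)) (r : ℝ × ℝ) :
    Antitone fun y => HV2 (insert y P) r := by
  intro a b hab
  apply ENNReal.toReal_mono (volume_biUnion_Icc_ne_top _ _)
  apply measure_mono
  simp only [Finset.set_biUnion_insert]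
  exact Set.union_subset_union_left _ (Set.Icc_subset_Icc_left hab)

theorem hvi2_extrema_on_cell_general (P : Finset (ℝ × ℝ)) (r l u : ℝ × ℝ) :
    ∀ y ∈ Set.Icc l u,
      HV2 (insert u P) r - HV2 P r ≤ HV2 (insert y P) r - HV2 P r ∧
        HV2 (insert y P) r - HV2 P r ≤ HV2 (insert l P) r - HV2 P r :=
  fun _ hy => ⟨sub_le_sub_right (antitone_HV2_insert P r hy.2) _,
    sub_le_sub_right (antitone_HV2_insert P r hy.1) _⟩

/-- On a non-dominated cell `[l, u]`, the hypervolume improvement `Δ⁺` attains its maximum at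
the lower-left corner `l` and its minimum at the upper-right corner `u`: for every `y` in the
cell, `Δ⁺(y) ∈ [Δ⁺(u), Δ⁺(l)]`. -/
theorem hvi2_extrema_on_cell (P : Finset (ℝ × ℝ)) (r l u : ℝ × ℝ)
    (hP : ∀ p ∈ P, p.1 < r.1 ∧ p.2 < r.2)
    (hlu : l ≤ u) (hur : u ≤ r)
    (hnondom : ∀ y ∈ Set.Icc l u, ∀ p ∈ P, ¬ p < y) :
    ∀ y ∈ Set.Icc l u,
      HV2 (insert u P) r - HV2 P r ≤ HV2 (insert y P) r - HV2 P r ∧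
        HV2 (insert y P) r - HV2 P r ≤ HV2 (insert l P) r - HV2 P r :=
  hvi2_extrema_on_cell_general P r l u
end

section
/- Let X₁, X₂ be independent random variables where Xₖ is a normal N(μₖ', σₖ²) truncated to [Lₖ, Uₖ] with 0 < Lₖ < Uₖ. If L₁U₂ < U₁L₂, then the density of the product X₁X₂ at p ∈ [L₁L₂, U₁U₂] equals D₁D₂ ∫_{α(p)}^{β(p)} φ_{μ₁',σ₁}(ζ) φ_{μ₂',σ₂}(p/ζ) dζ/ζ, where Dₖ = (Φ_{μₖ',σₖ}(Uₖ) − Φ_{μₖ',σₖ}(Lₖ))⁻¹ and [α(p), β(p)] = [L₁, p/L₂] if L₁L₂ ≤ p < L₁U₂, [p/U₂, p/L₂] if L₁U₂ ≤ p < U₁L₂, and [p/U₂, U₁] if U₁L₂ ≤ p ≤ U₁U₂. -/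
/-!
Since `X₁ ≥ L₁ > 0`, conditioning on `X₁` gives `P(X₁X₂ ≤ t) = ∫ f₁(x) F₂(t/x) dx`, where `f₁` is
the density of `X₁` and `F₂` the CDF of `X₂`. The density `f₂` of `X₂` is bounded, so `F₂` is
Lipschitz, and `x ≥ L₁` on the support of `f₁`; hence `t ↦ f₁(x) F₂(t/x)` is Lipschitz uniformly
in `x` with an integrable constant, and we may differentiate under the integral sign. For all but
two values of `x`, `F₂` is differentiable at `p/x` with derivative `f₂(p/x)`, so the density is
`∫ f₁(x) f₂(p/x) / x dx`. The integrand vanishes unless `x ∈ [L₁, U₁]` and `p/x ∈ [L₂, U₂]`,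
i.e. unless `x ∈ [max L₁ (p/U₂), min U₁ (p/L₂)] = [α p, β p]`.
-/

open MeasureTheory ProbabilityTheory Real

/-- The Gaussian PDF with mean `μ` and standard deviation `σ`. -/
noncomputable def phi (μ σ x : ℝ) : ℝ := gaussianPDFReal μ ⟨σ ^ 2, sq_nonneg σ⟩ x

/-- The Gaussian CDF with mean `μ` and standard deviation `σ`. -/
noncomputable def Phi (μ σ x : ℝ) : ℝ := ∫ t in Set.Iic x, phi μ σ t

open Set Filter Topology
open scoped NNReal

lemma phi_nonneg (μ σ x : ℝ) : 0 ≤ phi μ σ x := gaussianPDFReal_nonneg _ _ _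

lemma continuous_phi (μ σ : ℝ) : Continuous (phi μ σ) := by
  unfold phi gaussianPDFReal
  fun_prop

lemma integrable_phi (μ σ : ℝ) : Integrable (phi μ σ) := integrable_gaussianPDFReal _ _

lemma phi_le (μ σ x : ℝ) : phi μ σ x ≤ (√(2 * π * σ ^ 2))⁻¹ := by
  refine mul_le_of_le_one_right (by positivity) (exp_le_one_iff.2 ?_)
  exact div_nonpos_of_nonpos_of_nonneg (neg_nonpos.2 (sq_nonneg _))
    (mul_nonneg zero_le_two (NNReal.coe_nonneg _))

lemma Phi_sub_Phi_nonneg (μ σ : ℝ) {L U : ℝ} (h : L ≤ U) : 0 ≤ Phi μ σ U - Phi μ σ L := by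
  rw [Phi, Phi, intervalIntegral.integral_Iic_sub_Iic (integrable_phi μ σ).integrableOn
    (integrable_phi μ σ).integrableOn]
  exact intervalIntegral.integral_nonneg h fun x _ => phi_nonneg μ σ x

section Primitive

variable {f : ℝ → ℝ}

lemma lipschitzWith_integral_Iic (hf : Integrable f) {M : ℝ≥0} (hM : ∀ y, ‖f y‖ ≤ M) :
    LipschitzWith M fun s => ∫ y in Iic s, f y := by
  refine LipschitzWith.of_dist_le_mul fun a b => ?_
  rw [dist_eq_norm, intervalIntegral.integral_Iic_sub_Iic hf.integrableOn hf.integrableOn,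
    Real.dist_eq]
  exact intervalIntegral.norm_integral_le_of_norm_le_const fun y _ => hM y

lemma hasDerivAt_integral_Iic (hf : Integrable f) {s : ℝ}
    (hfm : StronglyMeasurableAtFilter f (𝓝 s)) (hc : ContinuousAt f s) :
    HasDerivAt (fun s => ∫ y in Iic s, f y) (f s) s := by
  have h := intervalIntegral.integral_hasDerivAt_right (a := 0) hf.intervalIntegrable hfm hc
  refine (h.const_add (∫ y in Iic 0, f y)).congr_of_eventuallyEq
    (Eventually.of_forall fun u => ?_)
  dsimp only
  rw [← intervalIntegral.integral_Iic_sub_Iic hf.integrableOn hf.integrableOn]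
  ring

lemma cdf_eq_integral_Iic {μ : Measure ℝ} [IsProbabilityMeasure μ] (hf : Integrable f)
    (hf₀ : ∀ y, 0 ≤ f y) (hμ : μ = volume.withDensity fun y => ENNReal.ofReal (f y)) (s : ℝ) :
    cdf μ s = ∫ y in Iic s, f y := by
  rw [cdf_eq_real, measureReal_def, hμ, withDensity_apply _ measurableSet_Iic,
    ← ofReal_integral_eq_lintegral_ofReal hf.integrableOn (ae_of_all _ hf₀),
    ENNReal.toReal_ofReal (setIntegral_nonneg measurableSet_Iic fun y _ => hf₀ y)]

end Primitive

section Product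

variable {Ω : Type*} [MeasureSpace Ω] [IsProbabilityMeasure (ℙ : Measure Ω)] {X₁ X₂ : Ω → ℝ}

lemma toReal_measure_mul_le_eq_integral (hm₁ : Measurable X₁) (hm₂ : Measurable X₂)
    (hindep : IndepFun X₁ X₂) {f : ℝ → ℝ} (hf : Measurable f) (hf₀ : ∀ x, 0 ≤ f x)
    (hf_pos : ∀ x, f x ≠ 0 → 0 < x)
    (hlaw : Measure.map X₁ ℙ = volume.withDensity fun x => ENNReal.ofReal (f x)) (t : ℝ) :
    (ℙ {ω | X₁ ω * X₂ ω ≤ t}).toReal = ∫ x, f x * cdf (Measure.map X₂ ℙ) (t / x) := by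
  have := Measure.isProbabilityMeasure_map (μ := ℙ) hm₂.aemeasurable
  have hs : MeasurableSet {q : ℝ × ℝ | q.1 * q.2 ≤ t} :=
    measurableSet_le (measurable_fst.mul measurable_snd) measurable_const
  have hprod : ℙ {ω | X₁ ω * X₂ ω ≤ t}
      = ((Measure.map X₁ ℙ).prod (Measure.map X₂ ℙ)) {q | q.1 * q.2 ≤ t} := by
    rw [← (indepFun_iff_map_prod_eq_prod_map_map hm₁.aemeasurable hm₂.aemeasurable).1 hindep,
      Measure.map_apply (hm₁.prodMk hm₂) hs]
    rfl
  have hslice : ∀ x,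
      ENNReal.ofReal (f x) * (Measure.map X₂ ℙ) (Prod.mk x ⁻¹' {q | q.1 * q.2 ≤ t})
        = ENNReal.ofReal (f x * cdf (Measure.map X₂ ℙ) (t / x)) := by
    intro x
    rcases eq_or_ne (f x) 0 with h | h
    · simp [h]
    have hpre : Prod.mk x ⁻¹' {q : ℝ × ℝ | q.1 * q.2 ≤ t} = Iic (t / x) := by
      ext y
      simp [le_div_iff₀ (hf_pos x h), mul_comm]
    rw [hpre, ENNReal.ofReal_mul (hf₀ x), cdf_eq_real, measureReal_def,
      ENNReal.ofReal_toReal (measure_ne_top _ _)]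
  have hmeas : Measurable fun x => f x * cdf (Measure.map X₂ ℙ) (t / x) :=
    hf.mul ((cdf _).mono.measurable.comp (measurable_const.div measurable_id))
  rw [hprod, Measure.prod_apply hs, hlaw,
    lintegral_withDensity_eq_lintegral_mul _ hf.ennreal_ofReal (measurable_measure_prodMk_left hs),
    integral_eq_lintegral_of_nonneg_ae (ae_of_all _ fun x => mul_nonneg (hf₀ x) (cdf_nonneg _ _))
      hmeas.aestronglyMeasurable]
  exact congrArg ENNReal.toReal (lintegral_congr hslice)

end Product

lemma hasDerivAt_integral_mul_comp_div {f F F' : ℝ → ℝ} {K : ℝ≥0} {L C p : ℝ} (hL : 0 < L)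
    (hf : Integrable f) (hf_supp : ∀ x, f x ≠ 0 → L ≤ x) (hF : LipschitzWith K F)
    (hF_bdd : ∀ s, ‖F s‖ ≤ C) (hF' : Measurable F')
    (hderiv : ∀ᵐ x, f x ≠ 0 → HasDerivAt F (F' (p / x)) (p / x)) :
    HasDerivAt (fun t => ∫ x, f x * F (t / x)) (∫ x, f x * F' (p / x) / x) p := by
  have hFm : ∀ t, AEStronglyMeasurable fun x => F (t / x) := fun t =>
    (hF.continuous.measurable.comp (measurable_const.div measurable_id)).aestronglyMeasurable
  have hF'm : AEStronglyMeasurable fun x => f x * F' (p / x) / x :=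
    ((hf.1.aemeasurable.mul (hF'.comp (measurable_const.div measurable_id)).aemeasurable).div
      measurable_id.aemeasurable).aestronglyMeasurable
  have hlip : ∀ᵐ x, LipschitzOnWith (Real.nnabs (‖f x‖ * (K / L)))
      (fun t => f x * F (t / x)) univ := by
    refine ae_of_all _ fun x => LipschitzOnWith.of_dist_le_mul fun t _ s _ => ?_
    rw [Real.coe_nnabs, abs_of_nonneg (by positivity)]
    rcases eq_or_ne (f x) 0 with h | h
    · simp [h]
    have hx : 0 < x := hL.trans_le (hf_supp x h)
    calc dist (f x * F (t / x)) (f x * F (s / x)) = ‖f x‖ * dist (F (t / x)) (F (s / x)) := by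
          rw [dist_eq_norm, dist_eq_norm, ← mul_sub, norm_mul]
      _ ≤ ‖f x‖ * (K * (dist t s / x)) := by
          gcongr
          calc _ ≤ K * dist (t / x) (s / x) := hF.dist_le_mul _ _
            _ = _ := by rw [Real.dist_eq, Real.dist_eq, ← sub_div, abs_div, abs_of_pos hx]
      _ ≤ ‖f x‖ * (K * (dist t s / L)) := by gcongr; exact hf_supp x h
      _ = ‖f x‖ * (K / L) * dist t s := by ring
  have hdiff : ∀ᵐ x, HasDerivAt (fun t => f x * F (t / x)) (f x * F' (p / x) / x) p := by
    filter_upwards [hderiv] with x hx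
    rcases eq_or_ne (f x) 0 with h | h
    · simpa [h] using hasDerivAt_const p (0 : ℝ)
    have hdiv : HasDerivAt (fun t : ℝ => t / x) (1 / x) p := (hasDerivAt_id' p).div_const x
    exact (((hx h).comp p hdiv).const_mul (f x)).congr_deriv (by ring)
  exact (hasDerivAt_integral_of_dominated_loc_of_lip univ_mem
    (Eventually.of_forall fun t => hf.1.mul (hFm t))
    (hf.mul_bdd (hFm p) (ae_of_all _ fun x => hF_bdd _)) hF'm hlip (hf.norm.mul_const _) hdiff).2

lemma ite_lt_mul_eq_max {a b p : ℝ} (hb : 0 < b) :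
    (if p < a * b then a else p / b) = max a (p / b) := by
  split_ifs with h
  · exact (max_eq_left ((div_lt_iff₀ hb).2 h).le).symm
  · exact (max_eq_right ((le_div_iff₀ hb).2 (not_lt.1 h))).symm

lemma ite_lt_mul_eq_min {a b p : ℝ} (hb : 0 < b) :
    (if p < a * b then p / b else a) = min a (p / b) := by
  split_ifs with h
  · exact (min_eq_right ((div_lt_iff₀ hb).2 h).le).symm
  · exact (min_eq_left ((le_div_iff₀ hb).2 (not_lt.1 h))).symm

lemma mem_Icc_and_div_mem_Icc_iff {L₁ U₁ L₂ U₂ p x : ℝ} (hL₁ : 0 < L₁) (hL₂ : 0 < L₂)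
    (hU₂ : 0 < U₂) :
    x ∈ Icc L₁ U₁ ∧ p / x ∈ Icc L₂ U₂ ↔ x ∈ Icc (max L₁ (p / U₂)) (min U₁ (p / L₂)) := by
  rcases le_or_gt x 0 with hx | hx
  · have hx₁ : ¬ L₁ ≤ x := fun h => (hL₁.trans_le h).not_ge hx
    simp [hx₁]
  · simp only [mem_Icc, max_le_iff, le_min_iff, le_div_iff₀ hx, div_le_iff₀ hx, div_le_iff₀ hU₂,
      le_div_iff₀ hL₂]
    constructor <;> rintro ⟨⟨h₁, h₂⟩, h₃, h₄⟩ <;> refine ⟨⟨?_, ?_⟩, ?_, ?_⟩ <;> linarith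

section TruncatedNormal

variable {μ σ L U D : ℝ}

variable (μ σ L U D) in
noncomputable def truncNormalPDF : ℝ → ℝ := (Icc L U).indicator fun t => D * phi μ σ t

lemma measurable_truncNormalPDF : Measurable (truncNormalPDF μ σ L U D) :=
  (measurable_const.mul (continuous_phi μ σ).measurable).indicator measurableSet_Icc

lemma integrable_truncNormalPDF : Integrable (truncNormalPDF μ σ L U D) :=
  ((integrable_phi μ σ).const_mul D).indicator measurableSet_Icc

lemma truncNormalPDF_nonneg (hD : 0 ≤ D) (x : ℝ) : 0 ≤ truncNormalPDF μ σ L U D x :=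
  indicator_nonneg (fun t _ => mul_nonneg hD (phi_nonneg μ σ t)) x

lemma norm_truncNormalPDF_le (hD : 0 ≤ D) (x : ℝ) :
    ‖truncNormalPDF μ σ L U D x‖ ≤ D * (√(2 * π * σ ^ 2))⁻¹ := by
  rw [Real.norm_of_nonneg (truncNormalPDF_nonneg hD x)]
  refine indicator_le_self' (fun t _ => mul_nonneg hD (phi_nonneg μ σ t)) x |>.trans ?_
  exact mul_le_mul_of_nonneg_left (phi_le μ σ x) hD

lemma continuousAt_truncNormalPDF {s : ℝ} (hL : s ≠ L) (hU : s ≠ U) :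
    ContinuousAt (truncNormalPDF μ σ L U D) s := by
  refine (continuous_const.mul (continuous_phi μ σ)).continuousOn.continuousAt_indicator
    fun hs => ?_
  rw [← Ici_inter_Iic] at hs
  rcases frontier_inter_subset _ _ hs with ⟨h, -⟩ | ⟨-, h⟩ <;> simp_all

variable {ν : Measure ℝ} [IsProbabilityMeasure ν]

lemma cdf_eq_integral_truncNormalPDF (hD : 0 ≤ D)
    (hν : ν = volume.withDensity fun x => ENNReal.ofReal (truncNormalPDF μ σ L U D x)) :
    ⇑(cdf ν) = fun s => ∫ y in Iic s, truncNormalPDF μ σ L U D y :=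
  funext (cdf_eq_integral_Iic integrable_truncNormalPDF (truncNormalPDF_nonneg hD) hν)

lemma lipschitzWith_cdf_of_truncNormalPDF (hD : 0 ≤ D)
    (hν : ν = volume.withDensity fun x => ENNReal.ofReal (truncNormalPDF μ σ L U D x)) :
    LipschitzWith (D * (√(2 * π * σ ^ 2))⁻¹).toNNReal (cdf ν) :=
  cdf_eq_integral_truncNormalPDF hD hν ▸ lipschitzWith_integral_Iic integrable_truncNormalPDF
    fun y => (norm_truncNormalPDF_le hD y).trans (Real.le_coe_toNNReal _)

lemma hasDerivAt_cdf_of_truncNormalPDF (hD : 0 ≤ D)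
    (hν : ν = volume.withDensity fun x => ENNReal.ofReal (truncNormalPDF μ σ L U D x))
    {s : ℝ} (hL : s ≠ L) (hU : s ≠ U) :
    HasDerivAt (cdf ν) (truncNormalPDF μ σ L U D s) s := by
  rw [cdf_eq_integral_truncNormalPDF hD hν]
  exact hasDerivAt_integral_Iic integrable_truncNormalPDF
    measurable_truncNormalPDF.stronglyMeasurable.stronglyMeasurableAtFilter
    (continuousAt_truncNormalPDF hL hU)

lemma truncNormalPDF_mul_truncNormalPDF_div {μ₂ σ₂ L₂ U₂ D₂ : ℝ} (hL : 0 < L) (hL₂ : 0 < L₂)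
    (hU₂ : 0 < U₂) (p x : ℝ) :
    truncNormalPDF μ σ L U D x * truncNormalPDF μ₂ σ₂ L₂ U₂ D₂ (p / x) / x
      = (Icc (max L (p / U₂)) (min U (p / L₂))).indicator
          (fun ζ => D * D₂ * (phi μ σ ζ * phi μ₂ σ₂ (p / ζ) / ζ)) x := by
  simp only [truncNormalPDF, indicator_apply, ← mem_Icc_and_div_mem_Icc_iff hL hL₂ hU₂]
  split_ifs <;> simp_all
  ring

end TruncatedNormal

theorem pdf_product_truncated_normal_general {Ω : Type*} [MeasureSpace Ω]
    [IsProbabilityMeasure (ℙ : Measure Ω)]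
    (X₁ X₂ : Ω → ℝ) (hm₁ : Measurable X₁) (hm₂ : Measurable X₂)
    (hindep : IndepFun X₁ X₂)
    (μ₁' μ₂' σ₁ σ₂ L₁ U₁ L₂ U₂ D₁ D₂ : ℝ)
    (hL₁ : 0 < L₁) (hU₁ : L₁ < U₁) (hL₂ : 0 < L₂) (hU₂ : L₂ < U₂)
    (hD₁ : D₁ = (Phi μ₁' σ₁ U₁ - Phi μ₁' σ₁ L₁)⁻¹)
    (hD₂ : D₂ = (Phi μ₂' σ₂ U₂ - Phi μ₂' σ₂ L₂)⁻¹)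
    (hlaw₁ : Measure.map X₁ ℙ = volume.withDensity fun x =>
      ENNReal.ofReal ((Set.Icc L₁ U₁).indicator (fun t => D₁ * phi μ₁' σ₁ t) x))
    (hlaw₂ : Measure.map X₂ ℙ = volume.withDensity fun x =>
      ENNReal.ofReal ((Set.Icc L₂ U₂).indicator (fun t => D₂ * phi μ₂' σ₂ t) x))
    (α β : ℝ → ℝ)
    (hα : ∀ p, α p = if p < L₁ * U₂ then L₁ else p / U₂)
    (hβ : ∀ p, β p = if p < U₁ * L₂ then p / L₂ else U₁) :
    ∀ p ∈ Set.Icc (L₁ * L₂) (U₁ * U₂),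
      HasDerivAt (fun t => (ℙ {ω | X₁ ω * X₂ ω ≤ t}).toReal)
        (D₁ * D₂ * ∫ ζ in (α p)..(β p), phi μ₁' σ₁ ζ * phi μ₂' σ₂ (p / ζ) / ζ) p := by
  rintro p ⟨hp₁, hp₂⟩
  have hU₂₀ : 0 < U₂ := hL₂.trans hU₂
  have hp₀ : 0 < p := (mul_pos hL₁ hL₂).trans_le hp₁
  have hD₁₀ : 0 ≤ D₁ := hD₁ ▸ inv_nonneg.2 (Phi_sub_Phi_nonneg μ₁' σ₁ hU₁.le)
  have hD₂₀ : 0 ≤ D₂ := hD₂ ▸ inv_nonneg.2 (Phi_sub_Phi_nonneg μ₂' σ₂ hU₂.le)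
  have := Measure.isProbabilityMeasure_map (μ := ℙ) hm₂.aemeasurable
  have hsupp : ∀ x, truncNormalPDF μ₁' σ₁ L₁ U₁ D₁ x ≠ 0 → L₁ ≤ x := fun x hx =>
    (mem_of_indicator_ne_zero hx).1
  have hcdf_deriv : ∀ᵐ x, truncNormalPDF μ₁' σ₁ L₁ U₁ D₁ x ≠ 0 →
      HasDerivAt (cdf (Measure.map X₂ ℙ)) (truncNormalPDF μ₂' σ₂ L₂ U₂ D₂ (p / x)) (p / x) := by
    filter_upwards [Measure.ae_ne volume (p / L₂), Measure.ae_ne volume (p / U₂)]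
      with x hxL hxU _
    refine hasDerivAt_cdf_of_truncNormalPDF hD₂₀ hlaw₂ ?_ ?_
    · exact fun h => hxL (by rw [← h, div_div_cancel₀ hp₀.ne'])
    · exact fun h => hxU (by rw [← h, div_div_cancel₀ hp₀.ne'])
  have hderiv := hasDerivAt_integral_mul_comp_div hL₁ integrable_truncNormalPDF hsupp
    (lipschitzWith_cdf_of_truncNormalPDF hD₂₀ hlaw₂)
    (fun s => by rw [Real.norm_of_nonneg (cdf_nonneg _ _)]; exact cdf_le_one _ _)
    measurable_truncNormalPDF hcdf_deriv
  have hαβ : max L₁ (p / U₂) ≤ min U₁ (p / L₂) :=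
    max_le (le_min hU₁.le ((le_div_iff₀ hL₂).2 hp₁))
      (le_min ((div_le_iff₀ hU₂₀).2 hp₂) (div_le_div_of_nonneg_left hp₀.le hL₂ hU₂.le))
  rw [funext (toReal_measure_mul_le_eq_integral hm₁ hm₂ hindep measurable_truncNormalPDF
    (truncNormalPDF_nonneg hD₁₀) (fun x hx => hL₁.trans_le (hsupp x hx)) hlaw₁)]
  convert hderiv using 1
  simp_rw [truncNormalPDF_mul_truncNormalPDF_div hL₁ hL₂ hU₂₀ p, hα, hβ,
    ite_lt_mul_eq_max hU₂₀, ite_lt_mul_eq_min hL₂]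
  rw [integral_indicator measurableSet_Icc, integral_Icc_eq_integral_Ioc,
    ← intervalIntegral.integral_of_le hαβ, intervalIntegral.integral_const_mul]

/-- The density of the product `X₁X₂` of two independent truncated normals: for
`p ∈ [L₁L₂, U₁U₂]` (in the case `L₁U₂ < U₁L₂`), the density at `p` (i.e. the derivative of the
CDF of `X₁X₂` at `p`) equals `D₁D₂ ∫_{α(p)}^{β(p)} φ₁(ζ) φ₂(p/ζ) dζ/ζ`. -/
theorem pdf_product_truncated_normal {Ω : Type*} [MeasureSpace Ω]
    [IsProbabilityMeasure (ℙ : Measure Ω)]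
    (X₁ X₂ : Ω → ℝ) (hm₁ : Measurable X₁) (hm₂ : Measurable X₂)
    (hindep : IndepFun X₁ X₂)
    (μ₁' μ₂' σ₁ σ₂ L₁ U₁ L₂ U₂ D₁ D₂ : ℝ)
    (hσ₁ : 0 < σ₁) (hσ₂ : 0 < σ₂)
    (hL₁ : 0 < L₁) (hU₁ : L₁ < U₁) (hL₂ : 0 < L₂) (hU₂ : L₂ < U₂)
    (hD₁ : D₁ = (Phi μ₁' σ₁ U₁ - Phi μ₁' σ₁ L₁)⁻¹)
    (hD₂ : D₂ = (Phi μ₂' σ₂ U₂ - Phi μ₂' σ₂ L₂)⁻¹)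
    (hlaw₁ : Measure.map X₁ ℙ = volume.withDensity fun x =>
      ENNReal.ofReal ((Set.Icc L₁ U₁).indicator (fun t => D₁ * phi μ₁' σ₁ t) x))
    (hlaw₂ : Measure.map X₂ ℙ = volume.withDensity fun x =>
      ENNReal.ofReal ((Set.Icc L₂ U₂).indicator (fun t => D₂ * phi μ₂' σ₂ t) x))
    (hcross : L₁ * U₂ < U₁ * L₂)
    (α β : ℝ → ℝ)
    (hα : ∀ p, α p = if p < L₁ * U₂ then L₁ else p / U₂)
    (hβ : ∀ p, β p = if p < U₁ * L₂ then p / L₂ else U₁) :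
    ∀ p ∈ Set.Icc (L₁ * L₂) (U₁ * U₂),
      HasDerivAt (fun t => (ℙ {ω | X₁ ω * X₂ ω ≤ t}).toReal)
        (D₁ * D₂ * ∫ ζ in (α p)..(β p), phi μ₁' σ₁ ζ * phi μ₂' σ₂ (p / ζ) / ζ) p :=
  pdf_product_truncated_normal_general X₁ X₂ hm₁ hm₂ hindep μ₁' μ₂' σ₁ σ₂ L₁ U₁ L₂ U₂ D₁ D₂ hL₁ hU₁
    hL₂ hU₂ hD₁ hD₂ hlaw₁ hlaw₂ α β hα hβ
end

section
/- The generalized hypervolume improvement Δ(y) := 1_{ndom(P̃)}(y)·Δ⁺(y) + 1_{dom(P̃)}(y)·Δ⁻(y) is componentwise antitone on {y : y ≤ r}: if y ≤ y' componentwise, then Δ(y') ≤ Δ(y). -/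
open MeasureTheory Classical

/-- The negative hypervolume improvement `Δ⁻(y) = −λ₂(dom(P̃) ∩ ndom({y}) ∩ (−∞, r])`. -/
noncomputable def negHVI (Ptilde : Finset (ℝ × ℝ)) (r y : ℝ × ℝ) : ℝ :=
  -(volume ({z : ℝ × ℝ | z ≤ r ∧ ∃ p ∈ Ptilde, p < z} ∩ {z : ℝ × ℝ | ¬ y ≤ z})).toReal

/-- The generalized hypervolume improvement
`Δ(y) = 1_{ndom(P̃)}(y) Δ⁺(y) + 1_{dom(P̃)}(y) Δ⁻(y)`. -/

noncomputable def genHVI (Ptilde : Finset (ℝ × ℝ)) (r y : ℝ × ℝ) : ℝ :=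
  (if ∀ p ∈ Ptilde, ¬ p < y then HV2 (insert y Ptilde) r - HV2 Ptilde r else 0) +
    (if ∃ p ∈ Ptilde, p < y then negHVI Ptilde r y else 0)

/-!
Dominated points are scored by `Δ⁻`, non-dominated ones by `Δ⁺`, and `Δ⁻ ≤ 0 ≤ Δ⁺`. Moving `y`
up keeps a dominated point dominated, so the only possible switch is from `Δ⁺` to `Δ⁻`, which
can only decrease the value. Within each regime it is inclusion of regions: `[y', r] ⊆ [y, r]`,
and `{z | ¬ y ≤ z} ⊆ {z | ¬ y' ≤ z}`.
-/

lemma measure_biUnion_Icc_ne_top {α : Type*} [Preorder α] [TopologicalSpace α]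
    [CompactIccSpace α] [MeasurableSpace α] {μ : Measure α} [IsFiniteMeasureOnCompacts μ]
    (A : Finset α) (r : α) : μ (⋃ a ∈ A, Set.Icc a r) ≠ ⊤ :=
  (measure_biUnion_lt_top A.finite_toSet fun _ _ => isCompact_Icc.measure_lt_top).ne

lemma HV2_mono {A B : Finset (ℝ × ℝ)} (r : ℝ × ℝ) (h : A ⊆ B) : HV2 A r ≤ HV2 B r :=
  ENNReal.toReal_mono (measure_biUnion_Icc_ne_top B r)
    (measure_mono (Set.biUnion_subset_biUnion_left (by exact_mod_cast h)))

lemma HV2_insert_antitone (A : Finset (ℝ × ℝ)) (r : ℝ × ℝ) {y y' : ℝ × ℝ} (h : y ≤ y') :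
    HV2 (insert y' A) r ≤ HV2 (insert y A) r := by
  refine ENNReal.toReal_mono (measure_biUnion_Icc_ne_top _ r) (measure_mono ?_)
  simp only [Finset.set_biUnion_insert]
  exact Set.union_subset_union_left _ (Set.Icc_subset_Icc_left h)

lemma HV2_insert_sub_nonneg (A : Finset (ℝ × ℝ)) (r y : ℝ × ℝ) :
    0 ≤ HV2 (insert y A) r - HV2 A r :=
  sub_nonneg.mpr (HV2_mono r (Finset.subset_insert y A))

lemma negHVI_nonpos (Ptilde : Finset (ℝ × ℝ)) (r y : ℝ × ℝ) : negHVI Ptilde r y ≤ 0 :=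
  neg_nonpos.mpr ENNReal.toReal_nonneg

lemma negHVI_antitone (Ptilde : Finset (ℝ × ℝ)) (r : ℝ × ℝ) : Antitone (negHVI Ptilde r) := by
  intro y y' h
  have hdom : {z : ℝ × ℝ | z ≤ r ∧ ∃ p ∈ Ptilde, p < z} ⊆ ⋃ p ∈ Ptilde, Set.Icc p r :=
    fun z ⟨hzr, p, hp, hpz⟩ => Set.mem_biUnion hp ⟨hpz.le, hzr⟩
  refine neg_le_neg (ENNReal.toReal_mono ?_ (measure_mono ?_))
  · exact ne_top_of_le_ne_top (measure_biUnion_Icc_ne_top Ptilde r)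
      (measure_mono (Set.inter_subset_left.trans hdom))
  · exact Set.inter_subset_inter_right _ fun z hz hz' => hz (h.trans hz')

lemma genHVI_of_forall_not_lt {Ptilde : Finset (ℝ × ℝ)} {r y : ℝ × ℝ}
    (hy : ∀ p ∈ Ptilde, ¬ p < y) :
    genHVI Ptilde r y = HV2 (insert y Ptilde) r - HV2 Ptilde r := by
  have hy' : ¬ ∃ p ∈ Ptilde, p < y := fun ⟨p, hp, hpy⟩ => hy p hp hpy
  simp only [genHVI, if_pos hy, if_neg hy', add_zero]

lemma genHVI_of_exists_lt {Ptilde : Finset (ℝ × ℝ)} {r y : ℝ × ℝ}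
    (hy : ∃ p ∈ Ptilde, p < y) : genHVI Ptilde r y = negHVI Ptilde r y := by
  have hy' : ¬ ∀ p ∈ Ptilde, ¬ p < y := fun h => hy.elim fun p ⟨hp, hpy⟩ => h p hp hpy
  simp only [genHVI, if_pos hy, if_neg hy', zero_add]

theorem genHVI_antitone_general (Ptilde : Finset (ℝ × ℝ)) (r : ℝ × ℝ) :
    ∀ y y' : ℝ × ℝ, y' ≤ r → y ≤ y' → genHVI Ptilde r y' ≤ genHVI Ptilde r y := by
  intro y y' _ hyy'
  by_cases hy : ∃ p ∈ Ptilde, p < y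
  · obtain ⟨p, hp, hpy⟩ := hy
    rw [genHVI_of_exists_lt ⟨p, hp, hpy⟩, genHVI_of_exists_lt ⟨p, hp, hpy.trans_le hyy'⟩]
    exact negHVI_antitone Ptilde r hyy'
  · push Not at hy
    rw [genHVI_of_forall_not_lt hy]
    by_cases hy' : ∃ p ∈ Ptilde, p < y'
    · rw [genHVI_of_exists_lt hy']
      exact (negHVI_nonpos Ptilde r y').trans (HV2_insert_sub_nonneg Ptilde r y)
    · push Not at hy'
      rw [genHVI_of_forall_not_lt hy']
      exact sub_le_sub_right (HV2_insert_antitone Ptilde r hyy') _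

/-- The generalized hypervolume improvement is componentwise antitone on `{y : y ≤ r}`. -/
theorem genHVI_antitone (Ptilde : Finset (ℝ × ℝ)) (r : ℝ × ℝ)
    (hnd : ∀ p ∈ Ptilde, ∀ q ∈ Ptilde, p ≤ q → p = q)
    (hr : ∀ p ∈ Ptilde, p.1 < r.1 ∧ p.2 < r.2) :
    ∀ y y' : ℝ × ℝ, y' ≤ r → y ≤ y' → genHVI Ptilde r y' ≤ genHVI Ptilde r y :=
  genHVI_antitone_general Ptilde r
end
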